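/- For any two framed linear diagrams G_1 and G_2, w_l(ψ_l(G_1 # G_2)) = w_l(ψ_l(G_2 # G_1)), where # denotes concatenation (connected sum) of linear diagrams along the oriented line. -/

import Mathlib

open FreeAbelianGroup

/-! ## Basic cyclic/linear combinatorics -/

/-- Cyclic successor on `Fin m`. -/
def cyc {m : ℕ} (p : Fin m) : Fin m :=
  ⟨(p.1 + 1) % m, by have := p.2; exact Nat.mod_lt _ (by omega)⟩

/-- Linear successor on `Fin m` (fixing the last point). -/
def lsuc {m : ℕ} (p : Fin m) : Fin m :=
  if h : p.1 + 1 < m then ⟨p.1 + 1, h⟩ else p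

/-- Rotation by `r` on `Fin m`. -/
def rotF {m : ℕ} (r : ℕ) (p : Fin m) : Fin m :=
  ⟨(p.1 + r) % m, by have := p.2; exact Nat.mod_lt _ (by omega)⟩

/-- The point relocation map: removes the point at position `s` and re-inserts it
at position `t`, shifting the intermediate points; it sends old positions to new
positions. -/
def reloc {m : ℕ} (s t : Fin m) (i : Fin m) : Fin m :=
  if s.1 ≤ t.1 then
    (if i = s then t else if h : s.1 < i.1 ∧ i.1 ≤ t.1 then ⟨i.1 - 1, by have := i.2; omega⟩ else i)
  else
    (if i = s then t else if h : t.1 ≤ i.1 ∧ i.1 < s.1 then ⟨i.1 + 1, by have := s.2; omega⟩ else i)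

/-- The "other end" of the chord passing through `p`, for a chord-labelling
function `c` in which every chord label occurs exactly twice. -/
noncomputable def otherPt {α : Type} [Fintype α] [DecidableEq α] {n : ℕ}
    (c : α → Fin n) (p : α) : α :=
  if h : (Finset.univ.filter fun q => c q = c p ∧ q ≠ p).Nonempty then h.choose else p

/-- Number of orbits of the equivalence relation generated by `r`. -/
noncomputable def orbitCount {α : Type} (r : α → α → Prop) : ℕ :=
  Nat.card (Quotient (Relation.EqvGen.setoid r))

/-! ## Chord diagrams on one circle -/

/-- A chord diagram with `n` chords: `2n` points on an oriented circle labelled by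
chords, each chord having exactly two endpoints. -/
structure CD (n : ℕ) where
  c : Fin (2 * n) → Fin n
  two : ∀ j, Fintype.card {p // c p = j} = 2

/-- A framed chord diagram: a chord diagram with a framing in `ℤ/2ℤ` on each chord. -/
structure FCD (n : ℕ) where
  c : Fin (2 * n) → Fin n
  fr : Fin n → ZMod 2
  two : ∀ j, Fintype.card {p // c p = j} = 2

/-- The number of connected components of the one-manifold obtained by surgery
along all chords of a chord diagram: traversing the surgered curve, the strand
arriving at a point `p` continues from the point right after the other end of the
chord at `p`. -/
noncomputable def betaCD {n : ℕ} (D : CD n) : ℕ :=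
  orbitCount (fun p q => cyc (otherPt D.c p) = q)

/-- Chords `j` and `k` appear in alternating (interleaved) position, with an
endpoint of `j` first. -/
def AltOrd {n : ℕ} (c : Fin (2 * n) → Fin n) (j k : Fin n) : Prop :=
  ∃ p₁ q₁ p₂ q₂ : Fin (2 * n), c p₁ = j ∧ c p₂ = j ∧ c q₁ = k ∧ c q₂ = k ∧
    p₁ < q₁ ∧ q₁ < p₂ ∧ p₂ < q₂

/-- Two chords are interleaved (linked) if their endpoints alternate around the circle. -/
def Interleaved {n : ℕ} (c : Fin (2 * n) → Fin n) (j k : Fin n) : Prop :=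
  AltOrd c j k ∨ AltOrd c k j

open Classical in
/-- The interlacement (intersection) matrix over `GF(2)`. -/
noncomputable def interMatrix {n : ℕ} (c : Fin (2 * n) → Fin n) :
    Matrix (Fin n) (Fin n) (ZMod 2) :=
  fun j k => if j ≠ k ∧ Interleaved c j k then 1 else 0

/-- `β` of a framed chord diagram, defined as `corank (A(D) + F(D)) + 1` over `GF(2)`. -/
noncomputable def betaFCD {n : ℕ} (D : FCD n) : ℕ :=
  (n - (interMatrix D.c + Matrix.diagonal D.fr).rank) + 1

/-- The 2T-relation for chord diagrams: chords `a` and `b`, appearing in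
non-interleaved position `a b … b a`, have their endpoints commuted at both
adjacent pairs simultaneously. -/
def TwoTCD {n : ℕ} (D D' : CD n) : Prop :=
  ∃ (p q : Fin (2 * n)) (a b : Fin n), a ≠ b ∧
    p ≠ q ∧ cyc p ≠ q ∧ p ≠ cyc q ∧
    ¬ Interleaved D.c a b ∧
    D.c p = a ∧ D.c (cyc p) = b ∧ D.c q = b ∧ D.c (cyc q) = a ∧
    D'.c p = b ∧ D'.c (cyc p) = a ∧ D'.c q = a ∧ D'.c (cyc q) = b ∧
    (∀ r, r ≠ p → r ≠ cyc p → r ≠ q → r ≠ cyc q → D'.c r = D.c r)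

/-- The framed 2T-relation: as `TwoTCD`, with framings preserved. -/
def TwoTFCD {n : ℕ} (D D' : FCD n) : Prop :=
  ∃ (p q : Fin (2 * n)) (a b : Fin n), a ≠ b ∧
    p ≠ q ∧ cyc p ≠ q ∧ p ≠ cyc q ∧
    ¬ Interleaved D.c a b ∧
    D.c p = a ∧ D.c (cyc p) = b ∧ D.c q = b ∧ D.c (cyc q) = a ∧
    D'.c p = b ∧ D'.c (cyc p) = a ∧ D'.c q = a ∧ D'.c (cyc q) = b ∧
    (∀ r, r ≠ p → r ≠ cyc p → r ≠ q → r ≠ cyc q → D'.c r = D.c r) ∧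
    D'.fr = D.fr

/-- Isomorphism of chord diagrams: a rotation of the core circle together with a
relabelling of the chords. -/
def IsoCD {n : ℕ} (D D' : CD n) : Prop :=
  ∃ (π : Equiv.Perm (Fin n)) (r : ℕ), ∀ p, D'.c p = π (D.c (rotF r p))

/-- Isomorphism of framed chord diagrams. -/
def IsoFCD {n : ℕ} (D D' : FCD n) : Prop :=
  ∃ (π : Equiv.Perm (Fin n)) (r : ℕ),
    (∀ p, D'.c p = π (D.c (rotF r p))) ∧ (∀ j, D'.fr (π j) = D.fr j)

/-- The 4T-relation quadruple for chord diagrams, with active chords `a`, `b`: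
`D₂` is obtained from `D₁` by sliding the endpoint `x = cyc y₁` of `b` past the
endpoint `y₁` of `a`, and `D₄` is obtained from `D₃` by the same slide past the
other endpoint `y₂` of `a`, where `D₃` is `D₁` with `x` relocated next to `y₂`. -/
def FourTQuadCD {n : ℕ} (D₁ D₂ D₃ D₄ : CD n) (a b : Fin n) : Prop :=
  ∃ (y₁ y₂ t : Fin (2 * n)), a ≠ b ∧
    D₁.c y₁ = a ∧ D₁.c y₂ = a ∧ D₁.c (cyc y₁) = b ∧ y₂ ≠ y₁ ∧ y₂ ≠ cyc y₁ ∧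
    (D₂.c y₁ = b ∧ D₂.c (cyc y₁) = a ∧
      ∀ r, r ≠ y₁ → r ≠ cyc y₁ → D₂.c r = D₁.c r) ∧
    (D₃.c ∘ reloc (cyc y₁) t = D₁.c) ∧
    t = cyc (reloc (cyc y₁) t y₂) ∧
    (D₄.c (reloc (cyc y₁) t y₂) = D₃.c t ∧ D₄.c t = D₃.c (reloc (cyc y₁) t y₂) ∧
      ∀ r, r ≠ reloc (cyc y₁) t y₂ → r ≠ t → D₄.c r = D₃.c r)

/-- The framed 4T-relation quadruple (all framing combinations allowed, framings preserved). -/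
def FourTQuadFCD {n : ℕ} (D₁ D₂ D₃ D₄ : FCD n) (a b : Fin n) : Prop :=
  ∃ (y₁ y₂ t : Fin (2 * n)), a ≠ b ∧
    D₁.c y₁ = a ∧ D₁.c y₂ = a ∧ D₁.c (cyc y₁) = b ∧ y₂ ≠ y₁ ∧ y₂ ≠ cyc y₁ ∧
    (D₂.c y₁ = b ∧ D₂.c (cyc y₁) = a ∧
      ∀ r, r ≠ y₁ → r ≠ cyc y₁ → D₂.c r = D₁.c r) ∧
    (D₃.c ∘ reloc (cyc y₁) t = D₁.c) ∧
    t = cyc (reloc (cyc y₁) t y₂) ∧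
    (D₄.c (reloc (cyc y₁) t y₂) = D₃.c t ∧ D₄.c t = D₃.c (reloc (cyc y₁) t y₂) ∧
      ∀ r, r ≠ reloc (cyc y₁) t y₂ → r ≠ t → D₄.c r = D₃.c r) ∧
    D₂.fr = D₁.fr ∧ D₃.fr = D₁.fr ∧ D₄.fr = D₁.fr

/-- Chord diagrams of all sizes. -/
def CDAll : Type := Σ n : ℕ, CD n

/-- Framed chord diagrams of all sizes. -/
def FCDAll : Type := Σ n : ℕ, FCD n

/-- Relators for the module `M` of chord diagrams: isomorphism relators and
4T-relators. -/
def cdRelators : Set (FreeAbelianGroup CDAll) :=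
  {x | (∃ (n : ℕ) (D D' : CD n), IsoCD D D' ∧ x = of ⟨n, D⟩ - of ⟨n, D'⟩) ∨
    (∃ (n : ℕ) (D₁ D₂ D₃ D₄ : CD n) (a b : Fin n), FourTQuadCD D₁ D₂ D₃ D₄ a b ∧
      x = of ⟨n, D₁⟩ - of ⟨n, D₂⟩ - of ⟨n, D₃⟩ + of ⟨n, D₄⟩)}

/-- Relators for the module `M^f` of framed chord diagrams. -/
def fcdRelators : Set (FreeAbelianGroup FCDAll) :=
  {x | (∃ (n : ℕ) (D D' : FCD n), IsoFCD D D' ∧ x = of ⟨n, D⟩ - of ⟨n, D'⟩) ∨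
    (∃ (n : ℕ) (D₁ D₂ D₃ D₄ : FCD n) (a b : Fin n), FourTQuadFCD D₁ D₂ D₃ D₄ a b ∧
      x = of ⟨n, D₁⟩ - of ⟨n, D₂⟩ - of ⟨n, D₃⟩ + of ⟨n, D₄⟩)}

/-- The module `M` of chord diagrams modulo 4T-relations. -/
abbrev ModM : Type := FreeAbelianGroup CDAll ⧸ AddSubgroup.closure cdRelators

/-- The module `M^f` of framed chord diagrams modulo framed 4T-relations. -/
abbrev ModMf : Type := FreeAbelianGroup FCDAll ⧸ AddSubgroup.closure fcdRelators

noncomputable def mkM : FreeAbelianGroup CDAll →+ ModM :=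
  QuotientAddGroup.mk' _

noncomputable def mkMf : FreeAbelianGroup FCDAll →+ ModMf :=
  QuotientAddGroup.mk' _

/-- `C` is a connected sum of `A` and `B`: for some choice of cut points
(rotations `r₁`, `r₂`), the chords of `A` occupy one arc of `C` and the chords of
`B` the complementary arc, in the same cyclic orders. -/
def IsConnSumCD {n₁ n₂ : ℕ} (A : CD n₁) (B : CD n₂) (C : CD (n₁ + n₂)) : Prop :=
  ∃ r₁ r₂ : ℕ,
    (∀ (i : Fin (2 * (n₁ + n₂))) (hi : i.1 < 2 * n₁),
      C.c i = Fin.castAdd n₂ (A.c ⟨(i.1 + r₁) % (2 * n₁), Nat.mod_lt _ (by omega)⟩)) ∧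
    (∀ (i : Fin (2 * (n₁ + n₂))) (hi : 2 * n₁ ≤ i.1),
      C.c i = Fin.natAdd n₁ (B.c ⟨(i.1 - 2 * n₁ + r₂) % (2 * n₂),
        Nat.mod_lt _ (by have := i.2; omega)⟩))

/-- `C` is a connected sum of the framed chord diagrams `A` and `B`. -/
def IsConnSumFCD {n₁ n₂ : ℕ} (A : FCD n₁) (B : FCD n₂) (C : FCD (n₁ + n₂)) : Prop :=
  (∃ r₁ r₂ : ℕ,
    (∀ (i : Fin (2 * (n₁ + n₂))) (hi : i.1 < 2 * n₁),
      C.c i = Fin.castAdd n₂ (A.c ⟨(i.1 + r₁) % (2 * n₁), Nat.mod_lt _ (by omega)⟩)) ∧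
    (∀ (i : Fin (2 * (n₁ + n₂))) (hi : 2 * n₁ ≤ i.1),
      C.c i = Fin.natAdd n₁ (B.c ⟨(i.1 - 2 * n₁ + r₂) % (2 * n₂),
        Nat.mod_lt _ (by have := i.2; omega)⟩))) ∧
    (∀ j, C.fr (Fin.castAdd n₂ j) = A.fr j) ∧ (∀ j, C.fr (Fin.natAdd n₁ j) = B.fr j)
/-! ## Double chord diagrams (chord diagrams on two circles) -/

/-- A double chord diagram with `n` chords and `m₁`, `m₂` marked points on the two
oriented core circles. -/
structure DCD (n m₁ m₂ : ℕ) where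
  c : Fin m₁ ⊕ Fin m₂ → Fin n
  two : ∀ j, Fintype.card {p // c p = j} = 2

/-- Simultaneous cyclic successor on the points of the two circles. -/
def cycS {m₁ m₂ : ℕ} : Fin m₁ ⊕ Fin m₂ → Fin m₁ ⊕ Fin m₂ := Sum.map cyc cyc

/-- The number of connected components of the one-manifold obtained by surgery
along all chords of a double chord diagram (a core circle without chord endpoints
contributes one component). -/
noncomputable def betaDCD {n m₁ m₂ : ℕ} (G : DCD n m₁ m₂) : ℕ :=
  orbitCount (fun p q => cycS (otherPt G.c p) = q) +
    (if m₁ = 0 then 1 else 0) + (if m₂ = 0 then 1 else 0)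

/-- The 2T-relation for double chord diagrams: the endpoints of two chords `a`,
`b`, occurring in two adjacent pairs `a b` and `b a`, are commuted at both pairs
simultaneously. -/
def TwoTDCD {n m₁ m₂ : ℕ} (G G' : DCD n m₁ m₂) : Prop :=
  ∃ (p q : Fin m₁ ⊕ Fin m₂) (a b : Fin n), a ≠ b ∧
    p ≠ q ∧ cycS p ≠ q ∧ p ≠ cycS q ∧
    G.c p = a ∧ G.c (cycS p) = b ∧ G.c q = b ∧ G.c (cycS q) = a ∧
    G'.c p = b ∧ G'.c (cycS p) = a ∧ G'.c q = a ∧ G'.c (cycS q) = b ∧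
    (∀ r, r ≠ p → r ≠ cycS p → r ≠ q → r ≠ cycS q → G'.c r = G.c r)

/-- Isomorphism of double chord diagrams: rotations of the two core circles
together with a relabelling of the chords. -/
def IsoDCD {n m₁ m₂ : ℕ} (G G' : DCD n m₁ m₂) : Prop :=
  ∃ (π : Equiv.Perm (Fin n)) (r₁ r₂ : ℕ),
    ∀ p, G'.c p = π (G.c (Sum.map (rotF r₁) (rotF r₂) p))

/-- Double chord diagrams of all sizes. -/
def DCDAll : Type := Σ (n m₁ m₂ : ℕ), DCD n m₁ m₂

/-- Relators for the module `M₂` of double chord diagrams: isomorphism relators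
and 4T-relators, each 4T-relator being a difference of two 2T-differences. -/
def dcdRelators : Set (FreeAbelianGroup DCDAll) :=
  {x | (∃ (n m₁ m₂ : ℕ) (G G' : DCD n m₁ m₂), IsoDCD G G' ∧
          x = of ⟨n, m₁, m₂, G⟩ - of ⟨n, m₁, m₂, G'⟩) ∨
    (∃ (n m₁ m₂ : ℕ) (G₁ G₂ G₃ G₄ : DCD n m₁ m₂),
      TwoTDCD G₁ G₂ ∧ TwoTDCD G₃ G₄ ∧
      x = of ⟨n, m₁, m₂, G₁⟩ - of ⟨n, m₁, m₂, G₂⟩ - of ⟨n, m₁, m₂, G₃⟩ + of ⟨n, m₁, m₂, G₄⟩)}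

/-- The module `M₂` of double chord diagrams modulo 4T-relations. -/
abbrev ModM2 : Type := FreeAbelianGroup DCDAll ⧸ AddSubgroup.closure dcdRelators

noncomputable def mkM2 : FreeAbelianGroup DCDAll →+ ModM2 :=
  QuotientAddGroup.mk' _

/-- The weight system `w` on linear combinations of double chord diagrams, given
by the number of connected components of the surgery one-manifold. -/
noncomputable def wDCD : FreeAbelianGroup DCDAll →+ ℤ :=
  FreeAbelianGroup.lift fun G => (betaDCD G.2.2.2 : ℤ)

/-! ## The parity map ψ -/

section Psi

variable {n : ℕ} (D : FCD n) (ε : Fin n → Bool)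

/-- The side on which the endpoint `p` is placed, for the choice `ε`: a chord of
framing `0` has both endpoints on the circle chosen by `ε`, a chord of framing `1`
has its endpoints on the two different circles. -/
noncomputable def psiSide (p : Fin (2 * n)) : Bool :=
  if D.fr (D.c p) = 0 then ε (D.c p)
  else xor (ε (D.c p)) (decide (otherPt D.c p < p))

/-- The points placed on the first circle. -/
noncomputable def psiS1 : Finset (Fin (2 * n)) :=
  Finset.univ.filter fun p => psiSide D ε p = false

/-- The points placed on the second circle. -/
noncomputable def psiS2 : Finset (Fin (2 * n)) :=
  Finset.univ.filter fun p => ¬ psiSide D ε p = false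

noncomputable def psiM1 : ℕ := (psiS1 D ε).card
noncomputable def psiM2 : ℕ := (psiS2 D ε).card

/-- Identification of the points of the summand of `ψ` with the points of `D`:
the first circle keeps the order of the core circle of `D`, the second circle
carries the reversed orientation. -/
noncomputable def psiEquiv : (Fin (psiM1 D ε) ⊕ Fin (psiM2 D ε)) ≃ Fin (2 * n) :=
  (Equiv.sumCongr
    (((psiS1 D ε).orderIsoOfFin rfl).toEquiv.trans
      (Equiv.subtypeEquivRight fun x => by simp [psiS1]))
    ((Fin.revPerm.trans ((psiS2 D ε).orderIsoOfFin rfl).toEquiv).trans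
      (Equiv.subtypeEquivRight fun x => by simp [psiS2]))).trans
    (Equiv.sumCompl fun x => psiSide D ε x = false)

/-- The summand of `ψ(D)` corresponding to the choice `ε`. -/
noncomputable def psiSummand : DCD n (psiM1 D ε) (psiM2 D ε) where
  c := D.c ∘ psiEquiv D ε
  two := fun j =>
    (Fintype.card_congr ((psiEquiv D ε).subtypeEquiv fun _ => Iff.rfl)).trans (D.two j)

/-- The summand of `ψ(D)` as an element of `DCDAll`. -/
noncomputable def psiSummandAll : DCDAll :=
  ⟨n, psiM1 D ε, psiM2 D ε, psiSummand D ε⟩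

/-- The parity map `ψ` on a framed chord diagram: the sum of the `2^n` double
chord diagrams obtained by distributing the chords over the two circles. -/
noncomputable def psi : FreeAbelianGroup DCDAll :=
  ∑ ε : Fin n → Bool, of (psiSummandAll D ε)

end Psi
/-! ## Framed linear diagrams -/

/-- A framed linear diagram: `2n` points on an oriented line, paired into `n`
arcs, each arc carrying a framing in `ℤ/2ℤ`. -/
structure FLD (n : ℕ) where
  c : Fin (2 * n) → Fin n
  fr : Fin n → ZMod 2
  two : ∀ j, Fintype.card {p // c p = j} = 2

/-- The closure of a framed linear diagram: joining the two ends of the line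
into an oriented circle. -/
def Cl {n : ℕ} (G : FLD n) : FCD n := ⟨G.c, G.fr, G.two⟩

/-- Isomorphism of framed linear diagrams (relabelling of arcs). -/
def IsoFLD {n : ℕ} (D D' : FLD n) : Prop :=
  ∃ π : Equiv.Perm (Fin n),
    (∀ p, D'.c p = π (D.c p)) ∧ (∀ j, D'.fr (π j) = D.fr j)

/-- The linear 4T-relation quadruple for framed linear diagrams (as the circular
one, with linear adjacency). -/
def FourTQuadFLD {n : ℕ} (D₁ D₂ D₃ D₄ : FLD n) (a b : Fin n) : Prop :=
  ∃ (y₁ y₂ t : Fin (2 * n)), a ≠ b ∧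
    y₁.1 + 1 < 2 * n ∧ (reloc (lsuc y₁) t y₂).1 + 1 < 2 * n ∧
    D₁.c y₁ = a ∧ D₁.c y₂ = a ∧ D₁.c (lsuc y₁) = b ∧ y₂ ≠ y₁ ∧ y₂ ≠ lsuc y₁ ∧
    (D₂.c y₁ = b ∧ D₂.c (lsuc y₁) = a ∧
      ∀ r, r ≠ y₁ → r ≠ lsuc y₁ → D₂.c r = D₁.c r) ∧
    (D₃.c ∘ reloc (lsuc y₁) t = D₁.c) ∧
    t = lsuc (reloc (lsuc y₁) t y₂) ∧
    (D₄.c (reloc (lsuc y₁) t y₂) = D₃.c t ∧ D₄.c t = D₃.c (reloc (lsuc y₁) t y₂) ∧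
      ∀ r, r ≠ reloc (lsuc y₁) t y₂ → r ≠ t → D₄.c r = D₃.c r) ∧
    D₂.fr = D₁.fr ∧ D₃.fr = D₁.fr ∧ D₄.fr = D₁.fr

/-- Framed linear diagrams of all sizes. -/
def FLDAll : Type := Σ n : ℕ, FLD n

/-- Relators for the module `L^f` of framed linear diagrams. -/
def fldRelators : Set (FreeAbelianGroup FLDAll) :=
  {x | (∃ (n : ℕ) (D D' : FLD n), IsoFLD D D' ∧ x = of ⟨n, D⟩ - of ⟨n, D'⟩) ∨
    (∃ (n : ℕ) (D₁ D₂ D₃ D₄ : FLD n) (a b : Fin n), FourTQuadFLD D₁ D₂ D₃ D₄ a b ∧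
      x = of ⟨n, D₁⟩ - of ⟨n, D₂⟩ - of ⟨n, D₃⟩ + of ⟨n, D₄⟩)}

/-- The module `L^f` of framed linear diagrams modulo linear 4T-relations. -/
abbrev ModLf : Type := FreeAbelianGroup FLDAll ⧸ AddSubgroup.closure fldRelators

noncomputable def mkLf : FreeAbelianGroup FLDAll →+ ModLf :=
  QuotientAddGroup.mk' _

/-! ## Double linear diagrams -/

/-- A double linear diagram with `n` arcs and `m₁`, `m₂` marked points on the two
oriented lines. -/
structure DLD (n m₁ m₂ : ℕ) where
  c : Fin m₁ ⊕ Fin m₂ → Fin n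
  two : ∀ j, Fintype.card {p // c p = j} = 2

/-- The segment of the lines lying immediately before the point `p` (the lines with
`mᵢ` marked points consist of `mᵢ + 1` segments). -/
def segBefore {m₁ m₂ : ℕ} : Fin m₁ ⊕ Fin m₂ → Fin (m₁ + 1) ⊕ Fin (m₂ + 1) :=
  Sum.map Fin.castSucc Fin.castSucc

/-- The segment of the lines lying immediately after the point `p`. -/
def segAfter {m₁ m₂ : ℕ} : Fin m₁ ⊕ Fin m₂ → Fin (m₁ + 1) ⊕ Fin (m₂ + 1) :=
  Sum.map Fin.succ Fin.succ

/-- The number of connected components of the one-manifold obtained by surgery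
along all arcs of a double linear diagram: the strand arriving at a point `p`
continues on the segment following the other end of the arc at `p`. -/
noncomputable def betaDLD {n m₁ m₂ : ℕ} (G : DLD n m₁ m₂) : ℕ :=
  orbitCount (fun s t : Fin (m₁ + 1) ⊕ Fin (m₂ + 1) =>
    ∃ p, s = segBefore p ∧ t = segAfter (otherPt G.c p))

/-- Simultaneous linear successor on the points of the two lines. -/
def lsucS {m₁ m₂ : ℕ} : Fin m₁ ⊕ Fin m₂ → Fin m₁ ⊕ Fin m₂ := Sum.map lsuc lsuc

/-- The linear 2T-relation for double linear diagrams. -/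
def TwoTDLD {n m₁ m₂ : ℕ} (G G' : DLD n m₁ m₂) : Prop :=
  ∃ (p q : Fin m₁ ⊕ Fin m₂) (a b : Fin n), a ≠ b ∧
    lsucS p ≠ p ∧ lsucS q ≠ q ∧
    p ≠ q ∧ lsucS p ≠ q ∧ p ≠ lsucS q ∧
    G.c p = a ∧ G.c (lsucS p) = b ∧ G.c q = b ∧ G.c (lsucS q) = a ∧
    G'.c p = b ∧ G'.c (lsucS p) = a ∧ G'.c q = a ∧ G'.c (lsucS q) = b ∧
    (∀ r, r ≠ p → r ≠ lsucS p → r ≠ q → r ≠ lsucS q → G'.c r = G.c r)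

/-- Isomorphism of double linear diagrams (relabelling of arcs). -/
def IsoDLD {n m₁ m₂ : ℕ} (G G' : DLD n m₁ m₂) : Prop :=
  ∃ π : Equiv.Perm (Fin n), ∀ p, G'.c p = π (G.c p)

/-- Double linear diagrams of all sizes. -/
def DLDAll : Type := Σ (n m₁ m₂ : ℕ), DLD n m₁ m₂

/-- Relators for the module `L₂` of double linear diagrams. -/
def dldRelators : Set (FreeAbelianGroup DLDAll) :=
  {x | (∃ (n m₁ m₂ : ℕ) (G G' : DLD n m₁ m₂), IsoDLD G G' ∧
          x = of ⟨n, m₁, m₂, G⟩ - of ⟨n, m₁, m₂, G'⟩) ∨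
    (∃ (n m₁ m₂ : ℕ) (G₁ G₂ G₃ G₄ : DLD n m₁ m₂),
      TwoTDLD G₁ G₂ ∧ TwoTDLD G₃ G₄ ∧
      x = of ⟨n, m₁, m₂, G₁⟩ - of ⟨n, m₁, m₂, G₂⟩ - of ⟨n, m₁, m₂, G₃⟩ + of ⟨n, m₁, m₂, G₄⟩)}

/-- The module `L₂` of double linear diagrams modulo linear 4T-relations. -/
abbrev ModL2 : Type := FreeAbelianGroup DLDAll ⧸ AddSubgroup.closure dldRelators

noncomputable def mkL2 : FreeAbelianGroup DLDAll →+ ModL2 :=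
  QuotientAddGroup.mk' _

/-- The weight system `w_l` on linear combinations of double linear diagrams. -/
noncomputable def wDLD : FreeAbelianGroup DLDAll →+ ℤ :=
  FreeAbelianGroup.lift fun G => (betaDLD G.2.2.2 : ℤ)

/-! ## The parity map ψₗ for linear diagrams -/

section PsiL

variable {n : ℕ} (D : FLD n) (ε : Fin n → Bool)

/-- The side on which the endpoint `p` is placed, for the choice `ε`. -/
noncomputable def psiLSide (p : Fin (2 * n)) : Bool :=
  if D.fr (D.c p) = 0 then ε (D.c p)
  else xor (ε (D.c p)) (decide (otherPt D.c p < p))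

noncomputable def psiLS1 : Finset (Fin (2 * n)) :=
  Finset.univ.filter fun p => psiLSide D ε p = false

noncomputable def psiLS2 : Finset (Fin (2 * n)) :=
  Finset.univ.filter fun p => ¬ psiLSide D ε p = false

noncomputable def psiLM1 : ℕ := (psiLS1 D ε).card
noncomputable def psiLM2 : ℕ := (psiLS2 D ε).card

/-- Identification of the points of the summand of `ψₗ` with the points of `D`;
the second line carries the reversed orientation. -/
noncomputable def psiLEquiv : (Fin (psiLM1 D ε) ⊕ Fin (psiLM2 D ε)) ≃ Fin (2 * n) :=
  (Equiv.sumCongr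
    (((psiLS1 D ε).orderIsoOfFin rfl).toEquiv.trans
      (Equiv.subtypeEquivRight fun x => by simp [psiLS1]))
    ((Fin.revPerm.trans ((psiLS2 D ε).orderIsoOfFin rfl).toEquiv).trans
      (Equiv.subtypeEquivRight fun x => by simp [psiLS2]))).trans
    (Equiv.sumCompl fun x => psiLSide D ε x = false)

/-- The summand of `ψₗ(D)` corresponding to the choice `ε`. -/
noncomputable def psiLSummand : DLD n (psiLM1 D ε) (psiLM2 D ε) where
  c := D.c ∘ psiLEquiv D ε
  two := fun j =>
    (Fintype.card_congr ((psiLEquiv D ε).subtypeEquiv fun _ => Iff.rfl)).trans (D.two j)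

/-- The summand of `ψₗ(D)` as an element of `DLDAll`. -/
noncomputable def psiLSummandAll : DLDAll :=
  ⟨n, psiLM1 D ε, psiLM2 D ε, psiLSummand D ε⟩

/-- The parity map `ψₗ` on a framed linear diagram. -/
noncomputable def psiL : FreeAbelianGroup DLDAll :=
  ∑ ε : Fin n → Bool, of (psiLSummandAll D ε)

end PsiL

/-! ## Concatenation of linear diagrams -/

/-- Identification of the points of `G₁ # G₂` with the points of `G₁` and `G₂`. -/
def concatEquiv (n₁ n₂ : ℕ) : Fin (2 * (n₁ + n₂)) ≃ (Fin (2 * n₁) ⊕ Fin (2 * n₂)) :=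
  (finCongr (by ring)).trans finSumFinEquiv.symm

/-- The connected sum (concatenation) `G₁ # G₂` of two framed linear diagrams. -/
def concatFLD {n₁ n₂ : ℕ} (G₁ : FLD n₁) (G₂ : FLD n₂) : FLD (n₁ + n₂) where
  c := Sum.elim (Fin.castAdd n₂ ∘ G₁.c) (Fin.natAdd n₁ ∘ G₂.c) ∘ concatEquiv n₁ n₂
  fr := Sum.elim G₁.fr G₂.fr ∘ finSumFinEquiv.symm
  two := by
    intro j
    set P : Fin (2 * n₁) ⊕ Fin (2 * n₂) → Fin (n₁ + n₂) :=
      Sum.elim (Fin.castAdd n₂ ∘ G₁.c) (Fin.natAdd n₁ ∘ G₂.c) with hP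
    have e1 : Fintype.card {p // (P ∘ concatEquiv n₁ n₂) p = j} =
        Fintype.card {q // P q = j} :=
      Fintype.card_congr ((concatEquiv n₁ n₂).subtypeEquiv fun _ => Iff.rfl)
    have e2 : Fintype.card {q // P q = j} =
        Fintype.card {x : Fin (2 * n₁) // P (Sum.inl x) = j} +
          Fintype.card {y : Fin (2 * n₂) // P (Sum.inr y) = j} := by
      rw [Fintype.card_congr (Equiv.subtypeSum (p := fun q => P q = j))]
      exact Fintype.card_sum
    show Fintype.card {p // (P ∘ concatEquiv n₁ n₂) p = j} = 2
    rw [e1, e2]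
    induction j using Fin.addCases with
    | left j =>
      have h2 : Fintype.card {y : Fin (2 * n₂) // P (Sum.inr y) = Fin.castAdd n₂ j} = 0 := by
        rw [Fintype.card_eq_zero_iff]
        refine ⟨fun ⟨y, hy⟩ => ?_⟩
        have hj := j.2
        simp only [hP, Sum.elim_inr, Function.comp_apply, Fin.ext_iff,
          Fin.coe_natAdd, Fin.coe_castAdd] at hy
        omega
      have h1 : Fintype.card {x : Fin (2 * n₁) // P (Sum.inl x) = Fin.castAdd n₂ j} = 2 := by
        rw [Fintype.card_congr (Equiv.subtypeEquivRight
          (p := fun x => P (Sum.inl x) = Fin.castAdd n₂ j)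
          (q := fun x => G₁.c x = j) fun x => by
          simp only [hP, Sum.elim_inl, Function.comp_apply, Fin.castAdd_inj])]
        exact G₁.two j
      omega
    | right j =>
      have h1 : Fintype.card {x : Fin (2 * n₁) // P (Sum.inl x) = Fin.natAdd n₁ j} = 0 := by
        rw [Fintype.card_eq_zero_iff]
        refine ⟨fun ⟨x, hx⟩ => ?_⟩
        have hx2 := (G₁.c x).2
        simp only [hP, Sum.elim_inl, Function.comp_apply, Fin.ext_iff,
          Fin.coe_natAdd, Fin.coe_castAdd] at hx
        omega
      have h2 : Fintype.card {y : Fin (2 * n₂) // P (Sum.inr y) = Fin.natAdd n₁ j} = 2 := by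
        rw [Fintype.card_congr (Equiv.subtypeEquivRight
          (p := fun y => P (Sum.inr y) = Fin.natAdd n₁ j)
          (q := fun y => G₂.c y = j) fun y => by
          simp only [hP, Sum.elim_inr, Function.comp_apply, Fin.ext_iff,
            Fin.coe_natAdd]
          omega)]
        exact G₂.two j
      omega

/-- `G` is the marked concatenation (connected sum) of the double linear diagrams
`X` and `Y`: the first (resp. second) line of `X` is glued to the beginning of the
first (resp. second) line of `Y`. -/
def IsConcatDLD {n n' a₁ a₂ b₁ b₂ : ℕ} (X : DLD n a₁ a₂) (Y : DLD n' b₁ b₂)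
    (G : DLD (n + n') (a₁ + b₁) (a₂ + b₂)) : Prop :=
  (∀ i : Fin a₁, G.c (Sum.inl (Fin.castAdd b₁ i)) = Fin.castAdd n' (X.c (Sum.inl i))) ∧
  (∀ i : Fin b₁, G.c (Sum.inl (Fin.natAdd a₁ i)) = Fin.natAdd n (Y.c (Sum.inl i))) ∧
  (∀ i : Fin a₂, G.c (Sum.inr (Fin.castAdd b₂ i)) = Fin.castAdd n' (X.c (Sum.inr i))) ∧
  (∀ i : Fin b₂, G.c (Sum.inr (Fin.natAdd a₂ i)) = Fin.natAdd n (Y.c (Sum.inr i)))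

/-- The marked concatenation relation on double linear diagrams of arbitrary sizes. -/
def IsConcatDLDAll (x y z : DLDAll) : Prop :=
  ∃ (n n' a₁ a₂ b₁ b₂ : ℕ) (X : DLD n a₁ a₂) (Y : DLD n' b₁ b₂)
    (G : DLD (n + n') (a₁ + b₁) (a₂ + b₂)),
    x = ⟨n, a₁, a₂, X⟩ ∧ y = ⟨n', b₁, b₂, Y⟩ ∧ z = ⟨n + n', a₁ + b₁, a₂ + b₂, G⟩ ∧
    IsConcatDLD X Y G
/-! ## Symmetries of double chord diagrams -/

/-- The double chord diagram obtained by simultaneously reversing the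
orientations of both core circles. -/
noncomputable def revBoth {n m₁ m₂ : ℕ} (G : DCD n m₁ m₂) : DCD n m₁ m₂ where
  c := G.c ∘ (Equiv.sumCongr (Fin.revPerm (n := m₁)) (Fin.revPerm (n := m₂)))
  two := fun j =>
    (Fintype.card_congr ((Equiv.sumCongr (Fin.revPerm (n := m₁))
      (Fin.revPerm (n := m₂))).subtypeEquiv fun _ => Iff.rfl)).trans (G.two j)

/-- The double chord diagram obtained by exchanging the two core circles. -/
noncomputable def swapCirc {n m₁ m₂ : ℕ} (G : DCD n m₁ m₂) : DCD n m₂ m₁ where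
  c := G.c ∘ (Equiv.sumComm (Fin m₂) (Fin m₁))
  two := fun j =>
    (Fintype.card_congr ((Equiv.sumComm (Fin m₂) (Fin m₁)).subtypeEquiv
      fun _ => Iff.rfl)).trans (G.two j)

/-- Isomorphism of double chord diagrams of arbitrary sizes. -/
def IsoDCDAll (x y : DCDAll) : Prop :=
  ∃ (n m₁ m₂ : ℕ) (G G' : DCD n m₁ m₂),
    x = ⟨n, m₁, m₂, G⟩ ∧ y = ⟨n, m₁, m₂, G'⟩ ∧ IsoDCD G G'

/-- Exchanging the two circles combined with reversing both orientations. -/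
noncomputable def swapRevAll (x : DCDAll) : DCDAll :=
  ⟨x.1, x.2.2.1, x.2.1, swapCirc (revBoth x.2.2.2)⟩

/-- The chord `j` of a double chord diagram joins the two core circles. -/
def JoinsCircles {n m₁ m₂ : ℕ} (G : DCD n m₁ m₂) (j : Fin n) : Prop :=
  ∃ (p : Fin m₁) (q : Fin m₂), G.c (Sum.inl p) = j ∧ G.c (Sum.inr q) = j

/-! Each summand of `ψₗ(G₁ # G₂)` is the concatenation of a summand `X` of `ψₗ(G₁)` with a
summand `Y` of `ψₗ(G₂)`. Since the second line of `ψₗ` runs against the core line, the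
concatenation is crossed: line 1 of `X` is followed by line 1 of `Y`, but line 2 of `Y` by
line 2 of `X`. The surgered one-manifold of the concatenation arises from those of `X` and `Y`
by two gluings of strand ends. The first joins two different components; so does the second,
unless the strand starting on line 2 of `X` ends on line 1 and the strand starting on line 1
of `Y` ends on line 2. In a double linear diagram the two open strands either both change
lines or both do not, so this condition is symmetric in `X` and `Y`, and
`β(X · Y) = β X + β Y - (1 or 2) = β(Y · X)`. -/

open Function Relation

section OrbitCount

variable {α β : Type}

lemma Relation.EqvGen.apply_eq {r : α → α → Prop} {f : α → β} (hf : ∀ a b, r a b → f a = f b)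
    {a b : α} (h : EqvGen r a b) : f a = f b :=
  congrArg (Quot.lift f hf) (Quot.eqvGen_sound h)

lemma Relation.EqvGen.map_of {r : α → α → Prop} {s : β → β → Prop} (f : α → β)
    (hf : ∀ a b, r a b → s (f a) (f b)) {a b : α} (h : EqvGen r a b) :
    EqvGen s (f a) (f b) :=
  Quot.eqvGen_exact (h.apply_eq fun a b hab => Quot.sound (hf a b hab))

lemma Relation.EqvGen.of_surjective {r : β → β → Prop} {s : α → α → Prop} {q : β → α}
    (hq : Surjective q) (hfib : ∀ a b, q a = q b → EqvGen r a b)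
    (hstep : ∀ a b, s (q a) (q b) → EqvGen r a b) {a b : β}
    (h : EqvGen s (q a) (q b)) : EqvGen r a b := by
  suffices ∀ u v, EqvGen s u v → ∀ a b, q a = u → q b = v → EqvGen r a b from
    this _ _ h a b rfl rfl
  intro u v huv
  induction huv with
  | rel u v huv => rintro a b rfl rfl; exact hstep a b huv
  | refl u => rintro a b rfl hb; exact hfib a b hb.symm
  | symm u v _ ih => exact fun a b ha hb => (ih b a hb ha).symm
  | trans u v w _ _ ih₁ ih₂ =>
    intro a b ha hb
    obtain ⟨c, rfl⟩ := hq v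
    exact (ih₁ a c ha rfl).trans _ _ _ (ih₂ c b rfl hb)

lemma orbitCount_eq_natCard {r : α → α → Prop} (f : α → β) (hf : Surjective f)
    (h : ∀ a b, EqvGen r a b ↔ f a = f b) : orbitCount r = Nat.card β :=
  Nat.card_congr ((Quotient.congrRight h).trans (Setoid.quotientKerEquivOfSurjective f hf))

lemma orbitCount_eq_natCard_quot (r : α → α → Prop) : orbitCount r = Nat.card (Quot r) :=
  orbitCount_eq_natCard (Quot.mk r) Quot.mk_surjective fun _ _ =>
    ⟨Quot.eqvGen_sound, Quot.eqvGen_exact⟩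

lemma orbitCount_eq_of_surjective {r : β → β → Prop} {s : α → α → Prop} (q : β → α)
    (hq : Surjective q) (hmap : ∀ a b, r a b → EqvGen s (q a) (q b))
    (hfib : ∀ a b, q a = q b → EqvGen r a b) (hstep : ∀ a b, s (q a) (q b) → EqvGen r a b) :
    orbitCount r = orbitCount s := by
  rw [orbitCount_eq_natCard_quot s]
  refine orbitCount_eq_natCard (Quot.mk s ∘ q) (Quot.mk_surjective.comp hq) fun a b =>
    ⟨fun h => h.apply_eq fun a b hab => Quot.eqvGen_sound (hmap a b hab),
      fun h => EqvGen.of_surjective hq hfib hstep (Quot.eqvGen_exact h)⟩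

lemma orbitCount_sumLiftRel [Finite α] [Finite β] (r : α → α → Prop) (s : β → β → Prop) :
    orbitCount (Sum.LiftRel r s) = orbitCount r + orbitCount s := by
  rw [orbitCount_eq_natCard_quot r, orbitCount_eq_natCard_quot s, ← Nat.card_sum]
  refine orbitCount_eq_natCard (Sum.map (Quot.mk r) (Quot.mk s))
    (Sum.map_surjective.mpr ⟨Quot.mk_surjective, Quot.mk_surjective⟩) fun x y =>
    ⟨fun h => h.apply_eq ?_, fun h => ?_⟩
  · rintro _ _ (⟨hab⟩ | ⟨hab⟩)
    · exact congrArg Sum.inl (Quot.sound hab)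
    · exact congrArg Sum.inr (Quot.sound hab)
  · rcases x with a | a <;> rcases y with b | b <;> simp only [Sum.map_inl, Sum.map_inr,
      Sum.inl.injEq, Sum.inr.injEq, reduceCtorEq] at h
    · exact (Quot.eqvGen_exact h).map_of Sum.inl fun _ _ => Sum.LiftRel.inl
    · exact (Quot.eqvGen_exact h).map_of Sum.inr fun _ _ => Sum.LiftRel.inr

def addEdge (r : α → α → Prop) (x y : α) : α → α → Prop :=
  fun a b => r a b ∨ (a = x ∧ b = y)

variable {r : α → α → Prop} {x y : α}

lemma eqvGen_addEdge_of_eqvGen {a b : α} (h : EqvGen r a b) : EqvGen (addEdge r x y) a b :=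
  EqvGen.mono (fun _ _ => Or.inl) _ _ h

lemma orbitCount_addEdge_of_eqvGen (h : EqvGen r x y) :
    orbitCount (addEdge r x y) = orbitCount r :=
  orbitCount_eq_of_surjective id surjective_id
    (fun _ _ hab => hab.elim (EqvGen.rel _ _) fun ⟨ha, hb⟩ => ha ▸ hb ▸ h)
    (fun a _ (hab : a = _) => by subst hab; exact EqvGen.refl a)
    (fun _ _ hab => EqvGen.rel _ _ (Or.inl hab))

lemma orbitCount_addEdge_of_not_eqvGen [Finite α] (h : ¬ EqvGen r x y) :
    orbitCount (addEdge r x y) + 1 = orbitCount r := by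
  classical
  have hxy : Quot.mk r x ≠ Quot.mk r y := fun h' => h (Quot.eqvGen_exact h')
  -- the class of `y` is merged into the class of `x`
  let f : α → {z : Quot r // z ≠ Quot.mk r y} := fun a =>
    if ha : Quot.mk r a = Quot.mk r y then ⟨Quot.mk r x, hxy⟩ else ⟨Quot.mk r a, ha⟩
  have hf : Surjective f := by
    rintro ⟨z, hz⟩
    obtain ⟨a, rfl⟩ := Quot.mk_surjective z
    exact ⟨a, by simp only [f, dif_neg hz]⟩
  rw [orbitCount_eq_natCard_quot r, ← Nat.card_congr (Equiv.optionSubtypeNe (Quot.mk r y)),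
    Finite.card_option, orbitCount_eq_natCard f hf fun a b => ⟨fun hab => hab.apply_eq ?_, ?_⟩]
  · rintro a b (hab | ⟨rfl, rfl⟩)
    · have hab := Quot.sound (r := r) hab
      simp only [f, hab]
    · simp only [f, dif_neg hxy, dif_pos rfl]
  · have hedge : EqvGen (addEdge r x y) x y := EqvGen.rel _ _ (Or.inr ⟨rfl, rfl⟩)
    intro hab
    by_cases ha : Quot.mk r a = Quot.mk r y <;> by_cases hb : Quot.mk r b = Quot.mk r y <;>
      simp only [f, ha, hb, dif_pos, dif_neg, not_false_eq_true, Subtype.mk.injEq] at hab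
    · exact eqvGen_addEdge_of_eqvGen (Quot.eqvGen_exact (ha.trans hb.symm))
    · exact (eqvGen_addEdge_of_eqvGen (Quot.eqvGen_exact ha)).trans _ _ _
        ((hedge.symm _ _).trans _ _ _ (eqvGen_addEdge_of_eqvGen (Quot.eqvGen_exact hab)))
    · exact ((eqvGen_addEdge_of_eqvGen (Quot.eqvGen_exact hab)).trans _ _ _ hedge).trans _ _ _
        (eqvGen_addEdge_of_eqvGen (Quot.eqvGen_exact hb).symm)
    · exact eqvGen_addEdge_of_eqvGen (Quot.eqvGen_exact hab)

end OrbitCount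

lemma eqvGen_addEdge_sumLiftRel_inr_inl {α β : Type} {r : α → α → Prop} {s : β → β → Prop}
    {u a : α} {v b : β} :
    EqvGen (addEdge (Sum.LiftRel r s) (.inl u) (.inr v)) (.inr b) (.inl a) ↔
      EqvGen r a u ∧ EqvGen s v b := by
  classical
  constructor
  · intro h
    -- collapse the two classes joined by the new edge to `none`
    let f : α ⊕ β → Option (Quot r ⊕ Quot s) := Sum.elim
      (fun a => if EqvGen r a u then none else some (.inl (Quot.mk r a)))
      (fun b => if EqvGen s v b then none else some (.inr (Quot.mk s b)))
    have hf : f (.inr b) = f (.inl a) := h.apply_eq <| by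
      rintro _ _ ((⟨hab⟩ | ⟨hab⟩) | ⟨rfl, rfl⟩)
      · have hu : EqvGen r _ u ↔ EqvGen r _ u :=
          ⟨(EqvGen.rel _ _ hab).trans _ _ _, ((EqvGen.rel _ _ hab).symm _ _).trans _ _ _⟩
        simp only [f, Sum.elim_inl, hu, Quot.sound hab]
      · have hv : EqvGen s v _ ↔ EqvGen s v _ :=
          ⟨fun h => h.trans _ _ _ (EqvGen.rel _ _ hab),
            fun h => h.trans _ _ _ ((EqvGen.rel _ _ hab).symm _ _)⟩
        simp only [f, Sum.elim_inr, hv, Quot.sound hab]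
      · simp only [f, Sum.elim_inl, Sum.elim_inr, EqvGen.refl, if_true]
    by_cases ha : EqvGen r a u <;> by_cases hb : EqvGen s v b <;>
      simp [f, ha, hb] at hf ⊢
  · rintro ⟨hau, hvb⟩
    have hinl : EqvGen (addEdge (Sum.LiftRel r s) (.inl u) (.inr v)) (.inl a) (.inl u) :=
      eqvGen_addEdge_of_eqvGen (hau.map_of Sum.inl fun _ _ => Sum.LiftRel.inl)
    have hinr : EqvGen (addEdge (Sum.LiftRel r s) (.inl u) (.inr v)) (.inr v) (.inr b) :=
      eqvGen_addEdge_of_eqvGen (hvb.map_of Sum.inr fun _ _ => Sum.LiftRel.inr)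
    have hedge : EqvGen (addEdge (Sum.LiftRel r s) (.inl u) (.inr v)) (.inl u) (.inr v) :=
      EqvGen.rel _ _ (Or.inr ⟨rfl, rfl⟩)
    exact ((hinr.symm _ _).trans _ _ _ (hedge.symm _ _)).trans _ _ _ (hinl.symm _ _)

section TwoPaths

variable {α : Type} {r : α → α → Prop}

lemma eqvGen_iff_join_of_rightUnique (hr : Relator.RightUnique r) {a b : α} :
    EqvGen r a b ↔ Join (ReflTransGen r) a b := by
  have hjoin : Equivalence (Join (ReflTransGen r)) :=
    equivalence_join_reflTransGen fun a b c hab hac => ⟨b, .refl, hr hac hab ▸ .refl⟩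
  refine ⟨fun h => hjoin.eqvGen_iff.mp (EqvGen.mono ?_ _ _ h), fun ⟨c, hac, hbc⟩ =>
    (EqvGen.reflTransGen_le_eqvGen r _ _ hac).trans _ _ _
      ((EqvGen.reflTransGen_le_eqvGen r _ _ hbc).symm _ _)⟩
  exact fun a b hab => ⟨b, .single hab, .refl⟩

lemma Relation.ReflTransGen.eq_of_forall_not_rel_left {a b : α} (hb : ∀ c, ¬ r c b)
    (h : ReflTransGen r a b) : a = b :=
  h.cases_tail.elim Eq.symm fun ⟨c, _, hcb⟩ => absurd hcb (hb c)

lemma Relation.ReflTransGen.eq_of_forall_not_rel_right {a b : α} (ha : ∀ c, ¬ r a c)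
    (h : ReflTransGen r a b) : b = a :=
  h.cases_head.elim Eq.symm fun ⟨c, hac, _⟩ => absurd hac (ha c)

lemma exists_reflTransGen_forall_not_rel [Finite α] (hl : Relator.LeftUnique r) {a : α}
    (ha : ∀ b, ¬ r b a) : ∃ c, ReflTransGen r a c ∧ ∀ d, ¬ r c d := by
  by_contra! hcon
  choose next hnext using hcon
  -- otherwise `next` would be an injective, hence surjective, self-map of the points reachable
  -- from `a`, and `a` would have a predecessor
  let f : {c // ReflTransGen r a c} → {c // ReflTransGen r a c} :=
    fun c => ⟨next c.1 c.2, c.2.tail (hnext c.1 c.2)⟩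
  have hf : Injective f := fun c d hcd => by
    have hcd : next c.1 c.2 = next d.1 d.2 := congrArg Subtype.val hcd
    exact Subtype.ext (hl (hnext c.1 c.2) (hcd ▸ hnext d.1 d.2))
  obtain ⟨c, hc⟩ := Finite.surjective_of_injective hf ⟨a, .refl⟩
  have hc : next c.1 c.2 = a := congrArg Subtype.val hc
  exact ha c.1 (hc ▸ hnext c.1 c.2 :)

lemma eqvGen_of_eqvGen_of_two_ends [Finite α] (hr : Relator.RightUnique r)
    (hl : Relator.LeftUnique r) {A B C D : α} (hAC : A ≠ C) (hA : ∀ b, ¬ r b A)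
    (hC : ∀ b, ¬ r b C) (hD : ∀ d, ¬ r D d) (hends : ∀ x, (∀ d, ¬ r x d) → x = B ∨ x = D)
    (h : EqvGen r A D) : EqvGen r C B := by
  obtain ⟨z, hAz, hDz⟩ := (eqvGen_iff_join_of_rightUnique hr).mp h
  obtain rfl := hDz.eq_of_forall_not_rel_right hD
  obtain ⟨s, hCs, hs⟩ := exists_reflTransGen_forall_not_rel hl hC
  rcases hends s hs with rfl | rfl
  · exact EqvGen.reflTransGen_le_eqvGen r _ _ hCs
  · -- the paths from `A` and from `C` both reach `D`, so one contains the other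
    have hl' : Relator.RightUnique (swap r) := fun _ _ _ hab hac => hl hab hac
    rcases ReflTransGen.total_of_right_unique hl' (reflTransGen_swap.mpr hAz)
      (reflTransGen_swap.mpr hCs) with hCA | hAC'
    · exact absurd ((reflTransGen_swap.mp hCA).eq_of_forall_not_rel_left hA) hAC.symm
    · exact absurd ((reflTransGen_swap.mp hAC').eq_of_forall_not_rel_left hC) hAC

/-- `r` is a disjoint union of paths and cycles, with exactly two paths, starting at `A` and `C`. -/
lemma eqvGen_iff_of_two_ends [Finite α] (hr : Relator.RightUnique r)
    (hl : Relator.LeftUnique r) {A B C D : α} (hAC : A ≠ C) (hA : ∀ b, ¬ r b A)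
    (hC : ∀ b, ¬ r b C) (hB : ∀ d, ¬ r B d) (hD : ∀ d, ¬ r D d)
    (hends : ∀ x, (∀ d, ¬ r x d) → x = B ∨ x = D) : EqvGen r A D ↔ EqvGen r C B :=
  ⟨eqvGen_of_eqvGen_of_two_ends hr hl hAC hA hC hD hends,
    eqvGen_of_eqvGen_of_two_ends hr hl hAC.symm hC hA hB fun x hx => (hends x hx).symm⟩

end TwoPaths

section Surgery

variable {m₁ m₂ : ℕ}

/-- The relation of `betaDLD`, for an arbitrary other-endpoint map `o`. -/
def surgeryRel (o : Fin m₁ ⊕ Fin m₂ → Fin m₁ ⊕ Fin m₂) :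
    Fin (m₁ + 1) ⊕ Fin (m₂ + 1) → Fin (m₁ + 1) ⊕ Fin (m₂ + 1) → Prop :=
  fun s t => ∃ p, s = segBefore p ∧ t = segAfter (o p)

lemma betaDLD_eq_orbitCount_surgeryRel {n : ℕ} (G : DLD n m₁ m₂) :
    betaDLD G = orbitCount (surgeryRel (otherPt G.c)) := rfl

lemma betaDLD_eq_of_otherPt_finCongr {n m₁ m₂ M₁ M₂ : ℕ} (G : DLD n M₁ M₂) (h₁ : m₁ = M₁)
    (h₂ : m₂ = M₂) (o : Fin m₁ ⊕ Fin m₂ → Fin m₁ ⊕ Fin m₂)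
    (ho : ∀ y, otherPt G.c (Sum.map (finCongr h₁) (finCongr h₂) y) =
      Sum.map (finCongr h₁) (finCongr h₂) (o y)) :
    betaDLD G = orbitCount (surgeryRel o) := by
  subst h₁ h₂
  simp only [finCongr_refl, Equiv.coe_refl, Sum.map_id_id, id_eq] at ho
  rw [betaDLD_eq_orbitCount_surgeryRel, funext ho]

lemma segBefore_injective : Injective (segBefore (m₁ := m₁) (m₂ := m₂)) :=
  Sum.map_injective.mpr ⟨Fin.castSucc_injective _, Fin.castSucc_injective _⟩

lemma segAfter_injective : Injective (segAfter (m₁ := m₁) (m₂ := m₂)) :=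
  Sum.map_injective.mpr ⟨Fin.succ_injective _, Fin.succ_injective _⟩

lemma segAfter_ne_inl_zero (p : Fin m₁ ⊕ Fin m₂) : segAfter p ≠ .inl 0 := by
  rcases p with i | i <;> simp [segAfter, Fin.succ_ne_zero]

lemma segAfter_ne_inr_zero (p : Fin m₁ ⊕ Fin m₂) : segAfter p ≠ .inr 0 := by
  rcases p with i | i <;> simp [segAfter, Fin.succ_ne_zero]

lemma segBefore_ne_inl_last (p : Fin m₁ ⊕ Fin m₂) : segBefore p ≠ .inl (Fin.last m₁) := by
  rcases p with i | i <;> simp [segBefore, Fin.castSucc_ne_last]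

lemma segBefore_ne_inr_last (p : Fin m₁ ⊕ Fin m₂) : segBefore p ≠ .inr (Fin.last m₂) := by
  rcases p with i | i <;> simp [segBefore, Fin.castSucc_ne_last]

lemma eq_last_of_forall_ne_segBefore (s : Fin (m₁ + 1) ⊕ Fin (m₂ + 1))
    (hs : ∀ p, s ≠ segBefore p) : s = .inl (Fin.last m₁) ∨ s = .inr (Fin.last m₂) := by
  rcases s with j | j
  · refine .inl (by_contra fun hj => hs (.inl (j.castPred fun h => hj (h ▸ rfl))) ?_)
    simp [segBefore]
  · refine .inr (by_contra fun hj => hs (.inr (j.castPred fun h => hj (h ▸ rfl))) ?_)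
    simp [segBefore]

variable {o : Fin m₁ ⊕ Fin m₂ → Fin m₁ ⊕ Fin m₂}

lemma surgeryRel_rightUnique : Relator.RightUnique (surgeryRel o) := by
  rintro s t t' ⟨p, rfl, rfl⟩ ⟨p', hp, rfl⟩
  rw [segBefore_injective hp]

lemma surgeryRel_leftUnique (ho : Injective o) : Relator.LeftUnique (surgeryRel o) := by
  rintro s s' t ⟨p, rfl, rfl⟩ ⟨p', rfl, hp⟩
  rw [ho (segAfter_injective hp)]

/-- The strand starting at the beginning of line 1 ends at the end of line 2. -/
def IsCrossing (o : Fin m₁ ⊕ Fin m₂ → Fin m₁ ⊕ Fin m₂) : Prop :=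
  EqvGen (surgeryRel o) (.inl 0) (.inr (Fin.last m₂))

lemma isCrossing_iff (ho : Injective o) :
    IsCrossing o ↔ EqvGen (surgeryRel o) (.inr 0) (.inl (Fin.last m₁)) :=
  eqvGen_iff_of_two_ends surgeryRel_rightUnique (surgeryRel_leftUnique ho) Sum.inl_ne_inr
    (fun _ ⟨_, _, h⟩ => segAfter_ne_inl_zero _ h.symm)
    (fun _ ⟨_, _, h⟩ => segAfter_ne_inr_zero _ h.symm)
    (fun _ ⟨_, h, _⟩ => segBefore_ne_inl_last _ h.symm)
    (fun _ ⟨_, h, _⟩ => segBefore_ne_inr_last _ h.symm)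
    fun s hs => eq_last_of_forall_ne_segBefore s fun p hp => hs _ ⟨p, hp, rfl⟩

end Surgery

section CrossConcat

variable {a₁ a₂ b₁ b₂ : ℕ}

/-- The points of two double linear diagrams `X`, `Y` as the points of their concatenation:
line 1 carries the points of `X` followed by those of `Y`, line 2 those of `Y` followed by
those of `X` (the second line of `ψₗ` runs against the core line). -/
def crossConcatEquiv (a₁ a₂ b₁ b₂ : ℕ) :
    (Fin a₁ ⊕ Fin a₂) ⊕ (Fin b₁ ⊕ Fin b₂) ≃ Fin (a₁ + b₁) ⊕ Fin (b₂ + a₂) :=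
  (Equiv.sumSumSumComm _ _ _ _).trans
    (Equiv.sumCongr finSumFinEquiv ((Equiv.sumComm _ _).trans finSumFinEquiv))

@[simp] lemma crossConcatEquiv_inl_inl (i : Fin a₁) :
    crossConcatEquiv a₁ a₂ b₁ b₂ (.inl (.inl i)) = .inl (Fin.castAdd b₁ i) := rfl
@[simp] lemma crossConcatEquiv_inl_inr (i : Fin a₂) :
    crossConcatEquiv a₁ a₂ b₁ b₂ (.inl (.inr i)) = .inr (Fin.natAdd b₂ i) := rfl
@[simp] lemma crossConcatEquiv_inr_inl (i : Fin b₁) :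
    crossConcatEquiv a₁ a₂ b₁ b₂ (.inr (.inl i)) = .inl (Fin.natAdd a₁ i) := rfl
@[simp] lemma crossConcatEquiv_inr_inr (i : Fin b₂) :
    crossConcatEquiv a₁ a₂ b₁ b₂ (.inr (.inr i)) = .inr (Fin.castAdd a₂ i) := rfl

def crossConcat (o₁ : Fin a₁ ⊕ Fin a₂ → Fin a₁ ⊕ Fin a₂)
    (o₂ : Fin b₁ ⊕ Fin b₂ → Fin b₁ ⊕ Fin b₂) :
    Fin (a₁ + b₁) ⊕ Fin (b₂ + a₂) → Fin (a₁ + b₁) ⊕ Fin (b₂ + a₂) :=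
  crossConcatEquiv a₁ a₂ b₁ b₂ ∘ Sum.map o₁ o₂ ∘ (crossConcatEquiv a₁ a₂ b₁ b₂).symm

/-- The segments of `X` and `Y` as segments of their concatenation; it identifies the end of
line 1 of `X` with the start of line 1 of `Y`, and the end of line 2 of `Y` with the start
of line 2 of `X`. -/
def glueSeg (a₁ a₂ b₁ b₂ : ℕ) :
    (Fin (a₁ + 1) ⊕ Fin (a₂ + 1)) ⊕ (Fin (b₁ + 1) ⊕ Fin (b₂ + 1)) →
      Fin (a₁ + b₁ + 1) ⊕ Fin (b₂ + a₂ + 1)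
  | .inl (.inl j) => .inl ⟨j, by omega⟩
  | .inl (.inr j) => .inr ⟨b₂ + j, by omega⟩
  | .inr (.inl j) => .inl ⟨a₁ + j, by omega⟩
  | .inr (.inr j) => .inr ⟨j, by omega⟩

/-- `R` together with the two identifications made by `glueSeg`. -/
def glueRel {a₁ a₂ b₁ b₂ : ℕ}
    (R : (Fin (a₁ + 1) ⊕ Fin (a₂ + 1)) ⊕ (Fin (b₁ + 1) ⊕ Fin (b₂ + 1)) →
      (Fin (a₁ + 1) ⊕ Fin (a₂ + 1)) ⊕ (Fin (b₁ + 1) ⊕ Fin (b₂ + 1)) → Prop) :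
    (Fin (a₁ + 1) ⊕ Fin (a₂ + 1)) ⊕ (Fin (b₁ + 1) ⊕ Fin (b₂ + 1)) →
      (Fin (a₁ + 1) ⊕ Fin (a₂ + 1)) ⊕ (Fin (b₁ + 1) ⊕ Fin (b₂ + 1)) → Prop :=
  addEdge (addEdge R (.inl (.inl (Fin.last a₁))) (.inr (.inl 0)))
    (.inr (.inr (Fin.last b₂))) (.inl (.inr 0))

lemma glueSeg_surjective : Surjective (glueSeg a₁ a₂ b₁ b₂) := by
  rintro (⟨k, hk⟩ | ⟨k, hk⟩)
  · by_cases h : k ≤ a₁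
    · exact ⟨.inl (.inl ⟨k, by omega⟩), rfl⟩
    · exact ⟨.inr (.inl ⟨k - a₁, by omega⟩), by simp only [glueSeg]; congr; omega⟩
  · by_cases h : k ≤ b₂
    · exact ⟨.inr (.inr ⟨k, by omega⟩), rfl⟩
    · exact ⟨.inl (.inr ⟨k - b₂, by omega⟩), by simp only [glueSeg]; congr; omega⟩

lemma glueSeg_inl_inl_last :
    glueSeg a₁ a₂ b₁ b₂ (.inl (.inl (Fin.last a₁))) = glueSeg a₁ a₂ b₁ b₂ (.inr (.inl 0)) := by
  simp [glueSeg]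

lemma glueSeg_inr_inr_last :
    glueSeg a₁ a₂ b₁ b₂ (.inr (.inr (Fin.last b₂))) = glueSeg a₁ a₂ b₁ b₂ (.inl (.inr 0)) := by
  simp [glueSeg]

lemma glueSeg_segBefore (X : (Fin a₁ ⊕ Fin a₂) ⊕ (Fin b₁ ⊕ Fin b₂)) :
    glueSeg a₁ a₂ b₁ b₂ (Sum.map segBefore segBefore X) =
      segBefore (crossConcatEquiv a₁ a₂ b₁ b₂ X) := by
  rcases X with (i | i) | (i | i) <;> simp [glueSeg, segBefore, Fin.ext_iff]

lemma glueSeg_segAfter (X : (Fin a₁ ⊕ Fin a₂) ⊕ (Fin b₁ ⊕ Fin b₂)) :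
    glueSeg a₁ a₂ b₁ b₂ (Sum.map segAfter segAfter X) =
      segAfter (crossConcatEquiv a₁ a₂ b₁ b₂ X) := by
  rcases X with (i | i) | (i | i) <;> simp [glueSeg, segAfter, Fin.ext_iff, Nat.add_assoc]

end CrossConcat

section Gluing

variable {a₁ a₂ b₁ b₂ : ℕ}
  {o₁ : Fin a₁ ⊕ Fin a₂ → Fin a₁ ⊕ Fin a₂} {o₂ : Fin b₁ ⊕ Fin b₂ → Fin b₁ ⊕ Fin b₂}

lemma crossConcat_crossConcatEquiv (X : (Fin a₁ ⊕ Fin a₂) ⊕ (Fin b₁ ⊕ Fin b₂)) :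
    crossConcat o₁ o₂ (crossConcatEquiv a₁ a₂ b₁ b₂ X) =
      crossConcatEquiv a₁ a₂ b₁ b₂ (Sum.map o₁ o₂ X) := by
  simp [crossConcat]

lemma sumLiftRel_surgeryRel_iff
    {x y : (Fin (a₁ + 1) ⊕ Fin (a₂ + 1)) ⊕ (Fin (b₁ + 1) ⊕ Fin (b₂ + 1))} :
    Sum.LiftRel (surgeryRel o₁) (surgeryRel o₂) x y ↔
      ∃ X, x = Sum.map segBefore segBefore X ∧
        y = Sum.map segAfter segAfter (Sum.map o₁ o₂ X) := by
  constructor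
  · rintro (⟨⟨p, rfl, rfl⟩⟩ | ⟨⟨p, rfl, rfl⟩⟩)
    exacts [⟨.inl p, rfl, rfl⟩, ⟨.inr p, rfl, rfl⟩]
  · rintro ⟨p | p, rfl, rfl⟩
    exacts [.inl ⟨p, rfl, rfl⟩, .inr ⟨p, rfl, rfl⟩]

lemma eqvGen_of_glueSeg_eq
    {R : ((Fin (a₁ + 1) ⊕ Fin (a₂ + 1)) ⊕ (Fin (b₁ + 1) ⊕ Fin (b₂ + 1))) →
      ((Fin (a₁ + 1) ⊕ Fin (a₂ + 1)) ⊕ (Fin (b₁ + 1) ⊕ Fin (b₂ + 1))) → Prop}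
    {x y : (Fin (a₁ + 1) ⊕ Fin (a₂ + 1)) ⊕ (Fin (b₁ + 1) ⊕ Fin (b₂ + 1))}
    (h : glueSeg a₁ a₂ b₁ b₂ x = glueSeg a₁ a₂ b₁ b₂ y) : EqvGen (glueRel R) x y := by
  have glue₁ : EqvGen (glueRel R) (.inl (.inl (Fin.last a₁))) (.inr (.inl 0)) :=
    EqvGen.rel _ _ (.inl (.inr ⟨rfl, rfl⟩))
  have glue₂ : EqvGen (glueRel R) (.inr (.inr (Fin.last b₂))) (.inl (.inr 0)) :=
    EqvGen.rel _ _ (.inr ⟨rfl, rfl⟩)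
  rcases x with (j | j) | (j | j) <;> rcases y with (k | k) | (k | k) <;>
    simp only [glueSeg, Sum.inl.injEq, Sum.inr.injEq, Fin.mk.injEq, reduceCtorEq] at h <;>
    have := j.2 <;> have := k.2
  · exact Fin.ext h ▸ EqvGen.refl _
  · obtain rfl : j = Fin.last a₁ := Fin.ext (by rw [Fin.val_last]; omega)
    obtain rfl : k = 0 := Fin.ext (by rw [Fin.val_zero]; omega)
    exact glue₁
  · exact Fin.ext (by omega : j.1 = k.1) ▸ EqvGen.refl _
  · obtain rfl : j = 0 := Fin.ext (by rw [Fin.val_zero]; omega)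
    obtain rfl : k = Fin.last b₂ := Fin.ext (by rw [Fin.val_last]; omega)
    exact glue₂.symm _ _
  · obtain rfl : j = 0 := Fin.ext (by rw [Fin.val_zero]; omega)
    obtain rfl : k = Fin.last a₁ := Fin.ext (by rw [Fin.val_last]; omega)
    exact glue₁.symm _ _
  · exact Fin.ext (by omega : j.1 = k.1) ▸ EqvGen.refl _
  · obtain rfl : j = Fin.last b₂ := Fin.ext (by rw [Fin.val_last]; omega)
    obtain rfl : k = 0 := Fin.ext (by rw [Fin.val_zero]; omega)
    exact glue₂
  · exact Fin.ext h ▸ EqvGen.refl _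

lemma orbitCount_surgeryRel_crossConcat :
    orbitCount (surgeryRel (crossConcat o₁ o₂)) =
      orbitCount (glueRel (Sum.LiftRel (surgeryRel o₁) (surgeryRel o₂))) := by
  have hsurgery (X) : surgeryRel (crossConcat o₁ o₂)
      (glueSeg a₁ a₂ b₁ b₂ (Sum.map segBefore segBefore X))
      (glueSeg a₁ a₂ b₁ b₂ (Sum.map segAfter segAfter (Sum.map o₁ o₂ X))) :=
    ⟨_, glueSeg_segBefore X, by rw [glueSeg_segAfter, crossConcat_crossConcatEquiv]⟩
  refine (orbitCount_eq_of_surjective _ glueSeg_surjective ?_ (fun _ _ => eqvGen_of_glueSeg_eq)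
    ?_).symm
  · rintro _ _ ((hR | ⟨rfl, rfl⟩) | ⟨rfl, rfl⟩)
    · obtain ⟨X, rfl, rfl⟩ := sumLiftRel_surgeryRel_iff.mp hR
      exact EqvGen.rel _ _ (hsurgery X)
    · rw [glueSeg_inl_inl_last]; exact EqvGen.refl _
    · rw [glueSeg_inr_inr_last]; exact EqvGen.refl _
  · rintro a b ⟨P, ha, hb⟩
    obtain ⟨X, rfl⟩ := (crossConcatEquiv a₁ a₂ b₁ b₂).surjective P
    rw [← glueSeg_segBefore] at ha
    rw [crossConcat_crossConcatEquiv, ← glueSeg_segAfter] at hb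
    exact ((eqvGen_of_glueSeg_eq ha).trans _ _ _
      (EqvGen.rel _ _ (.inl (.inl (sumLiftRel_surgeryRel_iff.mpr ⟨X, rfl, rfl⟩))))).trans _ _ _
      (eqvGen_of_glueSeg_eq hb.symm)

open Classical in
lemma orbitCount_crossConcat_add (ho₁ : Injective o₁) :
    orbitCount (surgeryRel (crossConcat o₁ o₂)) +
        (if IsCrossing o₁ ∧ IsCrossing o₂ then 1 else 2) =
      orbitCount (surgeryRel o₁) + orbitCount (surgeryRel o₂) := by
  set R := Sum.LiftRel (surgeryRel o₁) (surgeryRel o₂)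
  set W := addEdge R (.inl (.inl (Fin.last a₁))) (.inr (.inl 0))
  -- the first gluing joins two segments lying in different diagrams
  have hW : orbitCount W + 1 = orbitCount R := orbitCount_addEdge_of_not_eqvGen fun h => by
    simpa using h.apply_eq (f := Sum.isLeft) fun _ _ hxy => by
      simpa using Sum.LiftRel.isLeft_congr hxy
  have hcross : EqvGen W (.inr (.inr (Fin.last b₂))) (.inl (.inr 0)) ↔
      IsCrossing o₁ ∧ IsCrossing o₂ := by
    rw [eqvGen_addEdge_sumLiftRel_inr_inl, isCrossing_iff ho₁]
    rfl
  rw [← orbitCount_sumLiftRel, ← hW, orbitCount_surgeryRel_crossConcat, glueRel]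
  split_ifs with hc
  · rw [orbitCount_addEdge_of_eqvGen (hcross.mpr hc)]
  · rw [← orbitCount_addEdge_of_not_eqvGen (mt hcross.mp hc)]

lemma orbitCount_crossConcat_comm (ho₁ : Injective o₁) (ho₂ : Injective o₂) :
    orbitCount (surgeryRel (crossConcat o₁ o₂)) =
      orbitCount (surgeryRel (crossConcat o₂ o₁)) := by
  have h₁₂ := orbitCount_crossConcat_add (o₂ := o₂) ho₁
  have h₂₁ := orbitCount_crossConcat_add (o₂ := o₁) ho₂
  by_cases hc : IsCrossing o₁ ∧ IsCrossing o₂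
  · rw [if_pos hc] at h₁₂; rw [if_pos hc.symm] at h₂₁; omega
  · rw [if_neg hc] at h₁₂; rw [if_neg (mt And.symm hc)] at h₂₁; omega

end Gluing

section OtherPt

variable {α β : Type} [Fintype α] [DecidableEq α] {n : ℕ} {c : α → Fin n}

lemma otherPt_eq_of_forall_iff {p x : α} (h : ∀ q, c q = c p ∧ q ≠ p ↔ q = x) :
    otherPt c p = x := by
  have hfilter : Finset.univ.filter (fun q => c q = c p ∧ q ≠ p) = {x} := by
    ext q; simpa using h q
  have hne : (Finset.univ.filter fun q => c q = c p ∧ q ≠ p).Nonempty := by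
    rw [hfilter]; exact Finset.singleton_nonempty x
  rw [otherPt, dif_pos hne]
  simpa [hfilter] using hne.choose_spec

lemma eq_otherPt_iff (h2 : ∀ j, Fintype.card {q // c q = j} = 2) {p q : α} :
    c q = c p ∧ q ≠ p ↔ q = otherPt c p := by
  have hcard : (Finset.univ.filter fun q => c q = c p ∧ q ≠ p).card = 1 := by
    have hfilter : Finset.univ.filter (fun q => c q = c p ∧ q ≠ p) =
        (Finset.univ.filter fun q => c q = c p).erase p := by
      ext q; simp [and_comm]
    rw [hfilter, Finset.card_erase_of_mem (by simp), ← Fintype.card_subtype, h2]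
  obtain ⟨x, hx⟩ := Finset.card_eq_one.mp hcard
  have hiff (q : α) : c q = c p ∧ q ≠ p ↔ q = x := by
    simpa using Finset.ext_iff.mp hx q
  rw [otherPt_eq_of_forall_iff hiff, hiff]

lemma otherPt_involutive (h2 : ∀ j, Fintype.card {q // c q = j} = 2) :
    Involutive (otherPt c) := fun p => by
  obtain ⟨hc, hne⟩ := (eq_otherPt_iff h2).mpr rfl
  exact ((eq_otherPt_iff h2).mp ⟨hc.symm, hne.symm⟩).symm

lemma otherPt_comp_equiv [Fintype β] [DecidableEq β]
    (h2 : ∀ j, Fintype.card {q // c q = j} = 2) (e : β ≃ α) (p : β) :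
    otherPt (c ∘ e) p = e.symm (otherPt c (e p)) :=
  otherPt_eq_of_forall_iff fun q => by
    rw [comp_apply, comp_apply, ← e.injective.ne_iff, eq_otherPt_iff h2, e.eq_symm_apply]

lemma otherPt_sumElim {γ : Type} [Fintype γ] [DecidableEq γ] {n₁ n₂ : ℕ} {c₁ : α → Fin n₁}
    {c₂ : γ → Fin n₂} (h₁ : ∀ j, Fintype.card {q // c₁ q = j} = 2)
    (h₂ : ∀ j, Fintype.card {q // c₂ q = j} = 2) :
    otherPt (Sum.elim (Fin.castAdd n₂ ∘ c₁) (Fin.natAdd n₁ ∘ c₂)) =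
      Sum.map (otherPt c₁) (otherPt c₂) := by
  funext p
  refine otherPt_eq_of_forall_iff fun q => ?_
  rcases p with a | b <;> rcases q with a' | b'
  · simpa using eq_otherPt_iff h₁
  · simp only [Sum.elim_inl, Sum.elim_inr, Sum.map_inl, comp_apply, Fin.ext_iff,
      Fin.val_castAdd, Fin.val_natAdd, ne_eq, reduceCtorEq, not_false_eq_true, and_true, iff_false]
    omega
  · simp only [Sum.elim_inl, Sum.elim_inr, Sum.map_inr, comp_apply, Fin.ext_iff,
      Fin.val_castAdd, Fin.val_natAdd, ne_eq, reduceCtorEq, not_false_eq_true, and_true, iff_false]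
    omega
  · simpa [Fin.ext_iff] using eq_otherPt_iff h₂

lemma otherPt_apply_equiv_of_comp_eq_sumElim {γ δ : Type} [Fintype γ] [DecidableEq γ]
    [Fintype δ] [DecidableEq δ] {n₁ n₂ : ℕ} {c : α → Fin (n₁ + n₂)} {c₁ : γ → Fin n₁}
    {c₂ : δ → Fin n₂} (h2 : ∀ j, Fintype.card {q // c q = j} = 2)
    (h₁ : ∀ j, Fintype.card {q // c₁ q = j} = 2) (h₂ : ∀ j, Fintype.card {q // c₂ q = j} = 2)
    (e : γ ⊕ δ ≃ α) (he : c ∘ e = Sum.elim (Fin.castAdd n₂ ∘ c₁) (Fin.natAdd n₁ ∘ c₂))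
    (y : γ ⊕ δ) : otherPt c (e y) = e (Sum.map (otherPt c₁) (otherPt c₂) y) := by
  have h := otherPt_comp_equiv h2 e y
  rw [he, otherPt_sumElim h₁ h₂] at h
  rw [h, e.apply_symm_apply]

end OtherPt

namespace Finset

variable {α β : Type} [LinearOrder α] [LinearOrder β]

lemma orderEmbOfFin_map (s : Finset α) (f : α ↪o β) {k : ℕ}
    (h : (s.map f.toEmbedding).card = k) (i : Fin k) :
    (s.map f.toEmbedding).orderEmbOfFin h i = f (s.orderEmbOfFin (by simpa using h) i) := by
  refine congrFun (orderEmbOfFin_unique h (fun i => ?_)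
    (f.strictMono.comp (orderEmbOfFin _ _).strictMono)).symm i
  exact mem_map_of_mem _ (orderEmbOfFin_mem _ _ i)

lemma orderEmbOfFin_union_cast_eq_append {s t u : Finset α} (hu : u = s ∪ t)
    (hst : ∀ x ∈ s, ∀ y ∈ t, x < y) {k l m : ℕ} (hs : s.card = k) (ht : t.card = l)
    (h : u.card = m) (hm : k + l = m) (i : Fin (k + l)) :
    u.orderEmbOfFin h (Fin.cast hm i) =
      Fin.append (s.orderEmbOfFin hs) (t.orderEmbOfFin ht) i := by
  subst hu hm
  refine congrFun (orderEmbOfFin_unique h (fun i => ?_) fun i j hij => ?_).symm i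
  · induction i using Fin.addCases <;> simp [orderEmbOfFin_mem]
  · induction i using Fin.addCases <;> induction j using Fin.addCases <;>
      simp only [Fin.append_left, Fin.append_right]
    · exact (orderEmbOfFin _ _).strictMono ((Fin.strictMono_castAdd _).lt_iff_lt.mp hij)
    · exact hst _ (orderEmbOfFin_mem _ _ _) _ (orderEmbOfFin_mem _ _ _)
    · rename_i i j
      exact absurd hij (by simp only [Fin.lt_def, Fin.val_natAdd, Fin.val_castAdd]; omega)
    · exact (orderEmbOfFin _ _).strictMono ((Fin.natAdd_lt_natAdd_iff _).mp hij)

end Finset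
lemma psiLEquiv_inr {n : ℕ} (D : FLD n) (ε : Fin n → Bool) (k : Fin (psiLM2 D ε)) :
    psiLEquiv D ε (.inr k) = (psiLS2 D ε).orderEmbOfFin rfl k.rev :=
  Finset.coe_orderIsoOfFin_apply _ _ _

section Concat

variable {n₁ n₂ : ℕ}

lemma concatEquiv_symm_inl_val (p : Fin (2 * n₁)) :
    ((concatEquiv n₁ n₂).symm (.inl p)).val = p.val := rfl

lemma concatEquiv_symm_inr_val (p : Fin (2 * n₂)) :
    ((concatEquiv n₁ n₂).symm (.inr p)).val = 2 * n₁ + p.val := rfl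

def concatLeft (n₁ n₂ : ℕ) : Fin (2 * n₁) ↪o Fin (2 * (n₁ + n₂)) :=
  OrderEmbedding.ofStrictMono (fun p => (concatEquiv n₁ n₂).symm (.inl p)) fun p q h => by
    rw [Fin.lt_def, concatEquiv_symm_inl_val, concatEquiv_symm_inl_val]; exact h

def concatRight (n₁ n₂ : ℕ) : Fin (2 * n₂) ↪o Fin (2 * (n₁ + n₂)) :=
  OrderEmbedding.ofStrictMono (fun p => (concatEquiv n₁ n₂).symm (.inr p)) fun p q h => by
    rw [Fin.lt_def, concatEquiv_symm_inr_val, concatEquiv_symm_inr_val]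
    exact Nat.add_lt_add_left h _

@[simp] lemma concatLeft_apply (p : Fin (2 * n₁)) :
    concatLeft n₁ n₂ p = (concatEquiv n₁ n₂).symm (.inl p) := rfl

@[simp] lemma concatRight_apply (p : Fin (2 * n₂)) :
    concatRight n₁ n₂ p = (concatEquiv n₁ n₂).symm (.inr p) := rfl

lemma concatLeft_lt_concatRight (p : Fin (2 * n₁)) (q : Fin (2 * n₂)) :
    concatLeft n₁ n₂ p < concatRight n₁ n₂ q := by
  have := p.2
  rw [concatLeft_apply, concatRight_apply, Fin.lt_def, concatEquiv_symm_inl_val,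
    concatEquiv_symm_inr_val]
  omega

lemma filter_concatEquiv (P : Fin (2 * n₁) ⊕ Fin (2 * n₂) → Prop) [DecidablePred P] :
    Finset.univ.filter (fun x => P (concatEquiv n₁ n₂ x)) =
      (Finset.univ.filter (P ∘ Sum.inl)).map (concatLeft n₁ n₂).toEmbedding ∪
        (Finset.univ.filter (P ∘ Sum.inr)).map (concatRight n₁ n₂).toEmbedding := by
  ext x
  obtain ⟨y | y, rfl⟩ := (concatEquiv n₁ n₂).symm.surjective x
  all_goals simp

variable (G₁ : FLD n₁) (G₂ : FLD n₂)

lemma concatFLD_c_comp_symm :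
    (concatFLD G₁ G₂).c ∘ (concatEquiv n₁ n₂).symm =
      Sum.elim (Fin.castAdd n₂ ∘ G₁.c) (Fin.natAdd n₁ ∘ G₂.c) := by
  funext y
  simp [concatFLD]

@[simp] lemma concatFLD_c_symm_inl (p : Fin (2 * n₁)) :
    (concatFLD G₁ G₂).c ((concatEquiv n₁ n₂).symm (.inl p)) = Fin.castAdd n₂ (G₁.c p) :=
  congrFun (concatFLD_c_comp_symm G₁ G₂) (.inl p)

@[simp] lemma concatFLD_c_symm_inr (p : Fin (2 * n₂)) :
    (concatFLD G₁ G₂).c ((concatEquiv n₁ n₂).symm (.inr p)) = Fin.natAdd n₁ (G₂.c p) :=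
  congrFun (concatFLD_c_comp_symm G₁ G₂) (.inr p)

@[simp] lemma concatFLD_fr_castAdd (j : Fin n₁) :
    (concatFLD G₁ G₂).fr (Fin.castAdd n₂ j) = G₁.fr j := by
  simp [concatFLD]

@[simp] lemma concatFLD_fr_natAdd (j : Fin n₂) :
    (concatFLD G₁ G₂).fr (Fin.natAdd n₁ j) = G₂.fr j := by
  simp [concatFLD]

end Concat

section PsiLConcat

variable {n₁ n₂ : ℕ} (G₁ : FLD n₁) (G₂ : FLD n₂)

lemma otherPt_concatFLD (y : Fin (2 * n₁) ⊕ Fin (2 * n₂)) :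
    otherPt (concatFLD G₁ G₂).c ((concatEquiv n₁ n₂).symm y) =
      (concatEquiv n₁ n₂).symm (Sum.map (otherPt G₁.c) (otherPt G₂.c) y) :=
  otherPt_apply_equiv_of_comp_eq_sumElim (concatFLD G₁ G₂).two G₁.two G₂.two _
    (concatFLD_c_comp_symm G₁ G₂) y

variable (ε : Fin (n₁ + n₂) → Bool)

lemma psiLSide_concatFLD (p : Fin (2 * (n₁ + n₂))) :
    psiLSide (concatFLD G₁ G₂) ε p =
      Sum.elim (psiLSide G₁ (ε ∘ Fin.castAdd n₂)) (psiLSide G₂ (ε ∘ Fin.natAdd n₁))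
        (concatEquiv n₁ n₂ p) := by
  obtain ⟨q | q, rfl⟩ := (concatEquiv n₁ n₂).symm.surjective p
  all_goals
    simp only [psiLSide, comp_apply, Equiv.apply_symm_apply, Sum.elim_inl, Sum.elim_inr,
      otherPt_concatFLD, Sum.map_inl, Sum.map_inr, concatFLD_c_symm_inl, concatFLD_c_symm_inr,
      concatFLD_fr_castAdd, concatFLD_fr_natAdd]
    simp only [← concatLeft_apply, ← concatRight_apply, OrderEmbedding.lt_iff_lt]

lemma psiLS1_concatFLD :
    psiLS1 (concatFLD G₁ G₂) ε =
      (psiLS1 G₁ (ε ∘ Fin.castAdd n₂)).map (concatLeft n₁ n₂).toEmbedding ∪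
        (psiLS1 G₂ (ε ∘ Fin.natAdd n₁)).map (concatRight n₁ n₂).toEmbedding := by
  simp only [psiLS1, psiLSide_concatFLD]
  exact filter_concatEquiv fun y => Sum.elim _ _ y = false

lemma psiLS2_concatFLD :
    psiLS2 (concatFLD G₁ G₂) ε =
      (psiLS2 G₁ (ε ∘ Fin.castAdd n₂)).map (concatLeft n₁ n₂).toEmbedding ∪
        (psiLS2 G₂ (ε ∘ Fin.natAdd n₁)).map (concatRight n₁ n₂).toEmbedding := by
  simp only [psiLS2, psiLSide_concatFLD]
  exact filter_concatEquiv fun y => ¬ Sum.elim _ _ y = false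

lemma card_map_concatLeft_union_map_concatRight (s : Finset (Fin (2 * n₁)))
    (t : Finset (Fin (2 * n₂))) :
    (s.map (concatLeft n₁ n₂).toEmbedding ∪ t.map (concatRight n₁ n₂).toEmbedding).card =
      s.card + t.card := by
  rw [Finset.card_union_of_disjoint, Finset.card_map, Finset.card_map]
  simp only [Finset.disjoint_left, Finset.mem_map, not_exists, not_and]
  rintro _ ⟨p, -, rfl⟩ q - hq
  exact (concatLeft_lt_concatRight p q).ne' hq

lemma psiLM1_concatFLD :
    psiLM1 G₁ (ε ∘ Fin.castAdd n₂) + psiLM1 G₂ (ε ∘ Fin.natAdd n₁) =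
      psiLM1 (concatFLD G₁ G₂) ε := by
  rw [psiLM1.eq_def (concatFLD G₁ G₂), psiLS1_concatFLD,
    card_map_concatLeft_union_map_concatRight]
  rfl

lemma psiLM2_concatFLD :
    psiLM2 G₂ (ε ∘ Fin.natAdd n₁) + psiLM2 G₁ (ε ∘ Fin.castAdd n₂) =
      psiLM2 (concatFLD G₁ G₂) ε := by
  rw [psiLM2.eq_def (concatFLD G₁ G₂), psiLS2_concatFLD,
    card_map_concatLeft_union_map_concatRight, add_comm]
  rfl

lemma orderEmbOfFin_map_concatLeft_union_map_concatRight {s : Finset (Fin (2 * n₁))}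
    {t : Finset (Fin (2 * n₂))} {u : Finset (Fin (2 * (n₁ + n₂)))}
    (hu : u = s.map (concatLeft n₁ n₂).toEmbedding ∪ t.map (concatRight n₁ n₂).toEmbedding)
    {m : ℕ} (h : u.card = m) (hm : s.card + t.card = m) (i : Fin (s.card + t.card)) :
    u.orderEmbOfFin h (Fin.cast hm i) =
      Fin.append (concatLeft n₁ n₂ ∘ s.orderEmbOfFin rfl)
        (concatRight n₁ n₂ ∘ t.orderEmbOfFin rfl) i := by
  rw [Finset.orderEmbOfFin_union_cast_eq_append hu
    (by simpa using fun p _ q _ => concatLeft_lt_concatRight p q) (Finset.card_map _)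
    (Finset.card_map _)]
  congr 1 <;> funext i <;> exact Finset.orderEmbOfFin_map _ _ _ i

noncomputable def psiLConcatEquiv :
    (Fin (psiLM1 G₁ (ε ∘ Fin.castAdd n₂)) ⊕ Fin (psiLM2 G₁ (ε ∘ Fin.castAdd n₂))) ⊕
      (Fin (psiLM1 G₂ (ε ∘ Fin.natAdd n₁)) ⊕ Fin (psiLM2 G₂ (ε ∘ Fin.natAdd n₁))) ≃
      Fin (psiLM1 (concatFLD G₁ G₂) ε) ⊕ Fin (psiLM2 (concatFLD G₁ G₂) ε) :=
  (crossConcatEquiv _ _ _ _).trans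
    (Equiv.sumCongr (finCongr (psiLM1_concatFLD G₁ G₂ ε))
      (finCongr (psiLM2_concatFLD G₁ G₂ ε)))

lemma psiLEquiv_concatFLD
    (X : (Fin (psiLM1 G₁ (ε ∘ Fin.castAdd n₂)) ⊕ Fin (psiLM2 G₁ (ε ∘ Fin.castAdd n₂))) ⊕
      (Fin (psiLM1 G₂ (ε ∘ Fin.natAdd n₁)) ⊕ Fin (psiLM2 G₂ (ε ∘ Fin.natAdd n₁)))) :
    psiLEquiv (concatFLD G₁ G₂) ε (psiLConcatEquiv G₁ G₂ ε X) =
      (concatEquiv n₁ n₂).symm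
        (Sum.map (psiLEquiv G₁ (ε ∘ Fin.castAdd n₂)) (psiLEquiv G₂ (ε ∘ Fin.natAdd n₁))
          X) := by
  have line₁ := orderEmbOfFin_map_concatLeft_union_map_concatRight (psiLS1_concatFLD G₁ G₂ ε)
    rfl (psiLM1_concatFLD G₁ G₂ ε)
  have line₂ := orderEmbOfFin_map_concatLeft_union_map_concatRight (psiLS2_concatFLD G₁ G₂ ε)
    rfl ((add_comm _ _).trans (psiLM2_concatFLD G₁ G₂ ε))
  have hM := psiLM2_concatFLD G₁ G₂ ε
  rcases X with (i | i) | (i | i)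
  · exact (line₁ (Fin.castAdd _ i)).trans (Fin.append_left _ _ i)
  · have hrev : (Fin.cast hM (Fin.natAdd _ i)).rev =
        Fin.cast ((add_comm _ _).trans hM) (Fin.castAdd _ i.rev) :=
      Fin.ext (by simp only [Fin.val_rev, Fin.val_cast, Fin.val_natAdd, Fin.val_castAdd]; omega)
    simp only [psiLConcatEquiv, Equiv.trans_apply, crossConcatEquiv_inl_inr,
      Equiv.sumCongr_apply, Sum.map_inr, finCongr_apply, psiLEquiv_inr, hrev]
    exact (line₂ _).trans (Fin.append_left _ _ _)
  · exact (line₁ (Fin.natAdd _ i)).trans (Fin.append_right _ _ i)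
  · have hrev : (Fin.cast hM (Fin.castAdd _ i)).rev =
        Fin.cast ((add_comm _ _).trans hM) (Fin.natAdd _ i.rev) :=
      Fin.ext (by simp only [Fin.val_rev, Fin.val_cast, Fin.val_natAdd, Fin.val_castAdd]; omega)
    simp only [psiLConcatEquiv, Equiv.trans_apply, crossConcatEquiv_inr_inr,
      Equiv.sumCongr_apply, Sum.map_inr, finCongr_apply, psiLEquiv_inr, hrev]
    exact (line₂ _).trans (Fin.append_right _ _ _)

lemma psiLSummand_concatFLD_c_comp :
    (psiLSummand (concatFLD G₁ G₂) ε).c ∘ psiLConcatEquiv G₁ G₂ ε =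
      Sum.elim (Fin.castAdd n₂ ∘ (psiLSummand G₁ (ε ∘ Fin.castAdd n₂)).c)
        (Fin.natAdd n₁ ∘ (psiLSummand G₂ (ε ∘ Fin.natAdd n₁)).c) := by
  funext X
  simp only [psiLSummand, comp_apply]
  rw [psiLEquiv_concatFLD, ← comp_apply (f := (concatFLD G₁ G₂).c), concatFLD_c_comp_symm]
  rcases X with X | X <;> rfl

lemma betaDLD_psiLSummand_concatFLD :
    betaDLD (psiLSummand (concatFLD G₁ G₂) ε) =
      orbitCount (surgeryRel (crossConcat (otherPt (psiLSummand G₁ (ε ∘ Fin.castAdd n₂)).c)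
        (otherPt (psiLSummand G₂ (ε ∘ Fin.natAdd n₁)).c))) := by
  refine betaDLD_eq_of_otherPt_finCongr _ (psiLM1_concatFLD G₁ G₂ ε)
    (psiLM2_concatFLD G₁ G₂ ε) _ fun y => ?_
  obtain ⟨X, rfl⟩ := (crossConcatEquiv _ _ _ _).surjective y
  rw [crossConcat_crossConcatEquiv]
  exact otherPt_apply_equiv_of_comp_eq_sumElim (psiLSummand _ ε).two (psiLSummand _ _).two
    (psiLSummand _ _).two (psiLConcatEquiv G₁ G₂ ε) (psiLSummand_concatFLD_c_comp G₁ G₂ ε) X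

end PsiLConcat

lemma wDLD_of (x : DLDAll) : wDLD (of x) = betaDLD x.2.2.2 :=
  FreeAbelianGroup.lift_apply_of _ _

/-- For any two framed linear diagrams `G₁` and `G₂`,
`w_l(ψ_l(G₁ # G₂)) = w_l(ψ_l(G₂ # G₁))`. -/
theorem wDLD_psiL_concat_comm {n₁ n₂ : ℕ} (G₁ : FLD n₁) (G₂ : FLD n₂) :
    wDLD (psiL (concatFLD G₁ G₂)) = wDLD (psiL (concatFLD G₂ G₁)) := by
  simp only [psiL, map_sum, wDLD_of]
  dsimp only [psiLSummandAll]
  -- a choice `ε` for `G₂ # G₁` corresponds to the choice `ε ∘ finAddFlip.symm` for `G₁ # G₂`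
  rw [← (finAddFlip.arrowCongr (Equiv.refl Bool) : (Fin (n₂ + n₁) → Bool) ≃ _).sum_comp]
  refine Fintype.sum_congr _ _ fun ε => congrArg Nat.cast ?_
  have hflip₁ :
      finAddFlip.arrowCongr (Equiv.refl Bool) ε ∘ Fin.castAdd n₂ = ε ∘ Fin.natAdd n₂ :=
    funext fun k => congrArg ε (finAddFlip.symm_apply_eq.mpr (finAddFlip_apply_natAdd k n₂).symm)
  have hflip₂ :
      finAddFlip.arrowCongr (Equiv.refl Bool) ε ∘ Fin.natAdd n₁ = ε ∘ Fin.castAdd n₁ :=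
    funext fun k => congrArg ε (finAddFlip.symm_apply_eq.mpr (finAddFlip_apply_castAdd k n₁).symm)
  rw [betaDLD_psiLSummand_concatFLD, betaDLD_psiLSummand_concatFLD, hflip₁, hflip₂]
  exact orbitCount_crossConcat_comm (otherPt_involutive (psiLSummand _ _).two).injective
    (otherPt_involutive (psiLSummand _ _).two).injective
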